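/- arXiv:2404.14008 — 3 statements merged into one kernel-verified Lean document; each statement's English description precedes it below -/
import Mathlib

section
/- For all integers n ≥ 2 and m with 0 ≤ m ≤ n-1, the quantity K_{n,m} := -C(n,2)·C(n,m)·C(n-2,m) - C(n,2)·Σ_{k=1}^{m} (-1)^k (C(n,m+k)·C(n-2,m-k) + C(n,m-k)·C(n-2,m+k)) + ((2n-2m-1)/2)·Σ_{k=0}^{m} (-1)^k (1+2k)·C(n,m+1+k)·C(n,m-k) equals (n²/2)·C(n-1,m). -/
/-!
Write `S(a, b) = ∑ₖ (-1)^k C(a, m+k) C(b, m-k)`; it is `(-1)^m` times the coefficient of `X^(2m)`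
in `(1 - X)^a (1 + X)^b`. Since `(1 - X)^(q+2) (1 + X)^q = (1 - X²)^q (1 - X)²`,
`(1 - X)^q (1 + X)^(q+1) = (1 - X²)^q (1 + X)` and `(1 - X²)^q` only has even coefficients,
`S(n, n-2) = C(n-2, m) - C(n-2, m-1)` and `S(n-1, n) = C(n-1, m)`. The first two terms of `K_{n,m}`
are `-C(n, 2) S(n, n-2)`. In the weighted sum, split `1 + 2k = (m+1+k) - (m-k)` and absorb each
factor into its binomial coefficient; the reflection `k ↦ -1-k` glues the two halves into
`n S(n-1, n)`. Pascal's rule finishes the computation.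
-/

/-- Binomial coefficient extended to integer arguments: 0 unless 0 ≤ k ≤ n. -/
def ichoose (n k : ℤ) : ℤ :=
  if 0 ≤ k ∧ k ≤ n then (n.toNat).choose k.toNat else 0

open Polynomial Finset

section Polynomial

variable {R : Type*} [CommRing R]

theorem coeff_one_sub_X_pow (a k : ℕ) : ((1 - X : R[X]) ^ a).coeff k = (-1) ^ k * a.choose k := by
  have hpow (j : ℕ) : (-X : R[X]) ^ j * 1 ^ (a - j) = C ((-1) ^ j) * X ^ j := by
    rw [one_pow, mul_one, neg_pow, C_pow, C_neg, C_1]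
  rw [sub_eq_neg_add, add_pow, finsetSum_coeff, sum_eq_single k]
  · rw [hpow, ← C_eq_natCast, coeff_mul_C, coeff_C_mul_X_pow, if_pos rfl]
  · intro j _ hj
    rw [hpow, ← C_eq_natCast, coeff_mul_C, coeff_C_mul_X_pow, if_neg hj.symm, zero_mul]
  · intro hk
    rw [Nat.choose_eq_zero_of_lt (by simpa using hk)]
    simp

theorem one_sub_X_sq_pow_eq_expand (q : ℕ) :
    (1 - X ^ 2 : R[X]) ^ q = expand R 2 ((1 - X) ^ q) := by
  simp

theorem coeff_one_sub_X_sq_pow_two_mul (q m : ℕ) :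
    ((1 - X ^ 2 : R[X]) ^ q).coeff (2 * m) = (-1) ^ m * q.choose m := by
  rw [one_sub_X_sq_pow_eq_expand, coeff_expand_mul' two_pos, coeff_one_sub_X_pow]

theorem coeff_one_sub_X_sq_pow_two_mul_add_one (q m : ℕ) :
    ((1 - X ^ 2 : R[X]) ^ q).coeff (2 * m + 1) = 0 := by
  rw [one_sub_X_sq_pow_eq_expand, coeff_expand two_pos, if_neg (by omega)]

theorem sum_range_neg_one_pow_mul_choose_mul_choose (a b r : ℕ) :
    ∑ j ∈ range (r + 1), (-1 : R) ^ j * a.choose j * b.choose (r - j)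
      = ((1 - X : R[X]) ^ a * (1 + X) ^ b).coeff r := by
  rw [coeff_mul, Nat.sum_antidiagonal_eq_sum_range_succ_mk]
  simp only [coeff_one_sub_X_pow, coeff_one_add_X_pow]

end Polynomial

section IChoose

@[norm_cast]
theorem ichoose_natCast (a b : ℕ) : ichoose a b = a.choose b := by
  unfold ichoose
  split_ifs with h
  · simp
  · rw [Nat.choose_eq_zero_of_lt (by omega), Nat.cast_zero]

theorem ichoose_of_neg (n : ℤ) {k : ℤ} (hk : k < 0) : ichoose n k = 0 :=
  if_neg (by omega)

theorem ichoose_of_lt {n k : ℤ} (h : n < k) : ichoose n k = 0 :=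
  if_neg (by omega)

theorem ichoose_add_one (q : ℕ) (k : ℤ) :
    ichoose (q + 1) k = ichoose q k + ichoose q (k - 1) := by
  rcases lt_or_ge k 0 with hk | hk
  · rw [ichoose_of_neg _ hk, ichoose_of_neg _ hk, ichoose_of_neg _ (by omega), add_zero]
  lift k to ℕ using hk
  rcases k with _ | j
  · rw [ichoose_of_neg _ (by omega : (((0 : ℕ) : ℤ) - 1) < 0), add_zero]
    simp only [← Nat.cast_add_one, ichoose_natCast, Nat.choose_zero_right]
  · push_cast
    rw [add_sub_cancel_right, add_comm (ichoose _ _)]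
    exact_mod_cast Nat.choose_succ_succ' q j

theorem mul_ichoose_eq_mul_ichoose_sub_one (n k : ℤ) :
    k * ichoose n k = n * ichoose (n - 1) (k - 1) := by
  rcases le_or_gt k 0 with hk | hk
  · rw [ichoose_of_neg _ (by omega : k - 1 < 0), mul_zero]
    rcases hk.lt_or_eq with hk | rfl
    · rw [ichoose_of_neg _ hk, mul_zero]
    · rw [zero_mul]
  rcases lt_or_ge n k with hnk | hnk
  · rw [ichoose_of_lt hnk, ichoose_of_lt (by omega), mul_zero, mul_zero]
  lift n to ℕ using (by omega)
  lift k to ℕ using hk.le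
  obtain ⟨p, rfl⟩ : ∃ p, n = p + 1 := ⟨n - 1, by omega⟩
  obtain ⟨j, rfl⟩ : ∃ j, k = j + 1 := ⟨k - 1, by omega⟩
  push_cast
  simp only [add_sub_cancel_right]
  exact_mod_cast ((Nat.add_one_mul_choose_eq p j).trans (mul_comm _ _)).symm

theorem ichoose_two {K : Type*} [DivisionRing K] [NeZero (2 : K)] (n : ℤ) (hn : 0 ≤ n) :
    (ichoose n 2 : K) = n * (n - 1) / 2 := by
  lift n to ℕ using hn
  rw [show (2 : ℤ) = (2 : ℕ) from rfl, ichoose_natCast]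
  push_cast
  exact Nat.cast_choose_two K n

theorem sub_one_mul_ichoose_sub_ichoose (n m : ℤ) (hn : 2 ≤ n) :
    (n - 1) * (ichoose (n - 2) m - ichoose (n - 2) (m - 1))
      = (n - 1 - 2 * m) * ichoose (n - 1) m := by
  obtain ⟨q, rfl⟩ : ∃ q : ℕ, n = q + 2 := ⟨(n - 2).toNat, by omega⟩
  have hpascal := ichoose_add_one q m
  have habsorb := mul_ichoose_eq_mul_ichoose_sub_one (q + 1) m
  rw [show (q : ℤ) + 2 - 2 = q by ring, show (q : ℤ) + 2 - 1 = q + 1 by ring]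
  rw [show (q : ℤ) + 1 - 1 = q by ring] at habsorb
  linear_combination -((q : ℤ) + 1) * hpascal + 2 * habsorb

end IChoose

section IntervalSums

variable {M : Type*} [AddCommMonoid M]

theorem sum_Icc_reflect (g : ℤ → M) (a b c : ℤ) :
    ∑ k ∈ Icc a b, g (c - k) = ∑ k ∈ Icc (c - b) (c - a), g k :=
  sum_nbij' (c - ·) (c - ·) (by simp; omega) (by simp; omega) (by simp) (by simp) (by simp)

theorem sum_Icc_consecutive (g : ℤ → M) {a b c : ℤ} (hab : a ≤ b + 1) (hbc : b ≤ c) :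
    ∑ k ∈ Icc a b, g k + ∑ k ∈ Icc (b + 1) c, g k = ∑ k ∈ Icc a c, g k := by
  rw [← sum_union (disjoint_left.2 fun k hk hk' => by simp only [mem_Icc] at hk hk'; omega)]
  congr 1
  ext k
  simp only [mem_Icc, mem_union]
  omega

theorem sum_Icc_neg_self (g : ℤ → M) {m : ℤ} (hm : 0 ≤ m) :
    ∑ k ∈ Icc (-m) m, g k = g 0 + ∑ k ∈ Icc 1 m, (g k + g (-k)) := by
  rw [← sum_Icc_consecutive g (by omega : -m ≤ -1 + 1) (by omega : -1 ≤ m),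
    ← sum_Icc_consecutive g (by omega : -1 + 1 ≤ 0 + 1) hm, sum_add_distrib]
  have hneg := sum_Icc_reflect g 1 m 0
  simp only [zero_sub] at hneg
  rw [hneg]
  norm_num
  abel

theorem sum_Icc_neg_sub_one_self (g : ℤ → M) {m : ℤ} (hm : 0 ≤ m) :
    ∑ k ∈ Icc (-m - 1) m, g k = ∑ k ∈ Icc 0 m, (g k + g (-1 - k)) := by
  rw [← sum_Icc_consecutive g (by omega : -m - 1 ≤ -1 + 1) (by omega : -1 ≤ m), sum_add_distrib,
    sum_Icc_reflect, sub_zero, add_comm, show -1 - m = -m - 1 by ring]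
  norm_num

end IntervalSums

theorem neg_one_zpow_neg {K : Type*} [DivisionRing K] (k : ℤ) : (-1 : K) ^ (-k) = (-1) ^ k := by
  rw [zpow_neg, ← inv_zpow, inv_neg_one]

section Convolutions

variable {K : Type*} [Field K]

theorem sum_Icc_neg_one_zpow_mul_ichoose_mul_ichoose (a b m : ℕ) :
    ∑ k ∈ Icc (-(m : ℤ)) m, (-1 : K) ^ k * ((ichoose a (m + k) : K) * (ichoose b (m - k) : K))
      = (-1) ^ m * ((1 - X : K[X]) ^ a * (1 + X) ^ b).coeff (2 * m) := by
  rw [← sum_range_neg_one_pow_mul_choose_mul_choose, mul_sum]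
  symm
  refine sum_nbij' (fun j : ℕ => (j : ℤ) - m) (fun k => (k + m).toNat) (by simp; omega)
    (by simp; omega) (by simp) (by simp; omega) fun j hj => ?_
  have hj : j ≤ 2 * m := by simp at hj; omega
  rw [add_sub_cancel, show (m : ℤ) - (j - m) = ((2 * m - j : ℕ) : ℤ) by omega, ichoose_natCast,
    ichoose_natCast, zpow_sub₀ (by norm_num), zpow_natCast, zpow_natCast, div_eq_mul_inv,
    ← inv_pow, inv_neg, inv_one]
  push_cast
  ring

theorem sum_Icc_neg_one_zpow_mul_ichoose_mul_ichoose_sub_two (n m : ℤ) (hn : 2 ≤ n)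
    (hm : 0 ≤ m) :
    ∑ k ∈ Icc (-m) m, (-1 : K) ^ k * ((ichoose n (m + k) : K) * (ichoose (n - 2) (m - k) : K))
      = ichoose (n - 2) m - ichoose (n - 2) (m - 1) := by
  obtain ⟨q, rfl⟩ : ∃ q : ℕ, n = q + 2 := ⟨(n - 2).toNat, by omega⟩
  lift m to ℕ using hm
  have hfactor : (1 - X : K[X]) ^ (q + 2) * (1 + X) ^ q
      = (1 - X ^ 2) ^ q - C 2 * ((1 - X ^ 2) ^ q * X) + (1 - X ^ 2) ^ q * X ^ 2 := by
    rw [C_ofNat, show (1 - X ^ 2 : K[X]) = (1 - X) * (1 + X) by ring, mul_pow]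
    ring
  rw [add_sub_cancel_right, show (q : ℤ) + 2 = ((q + 2 : ℕ) : ℤ) by push_cast; rfl,
    sum_Icc_neg_one_zpow_mul_ichoose_mul_ichoose, hfactor, ichoose_natCast]
  rcases m with _ | m
  · simp [ichoose_of_neg, coeff_zero_eq_eval_zero]
  · rw [coeff_add, coeff_sub, coeff_C_mul, show 2 * (m + 1) = 2 * m + 1 + 1 by ring,
      coeff_mul_X, coeff_mul_X_pow, coeff_one_sub_X_sq_pow_two_mul_add_one,
      show 2 * m + 1 + 1 = 2 * (m + 1) by ring, coeff_one_sub_X_sq_pow_two_mul,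
      coeff_one_sub_X_sq_pow_two_mul, show ((m + 1 : ℕ) : ℤ) - 1 = m by push_cast; ring,
      ichoose_natCast]
    push_cast
    linear_combination ((q.choose (m + 1) : K) - q.choose m) *
      pow_mul_pow_eq_one m (by norm_num : (-1 : K) * -1 = 1)

theorem sum_Icc_neg_one_zpow_mul_ichoose_sub_one_mul_ichoose (n m : ℤ) (hn : 1 ≤ n)
    (hm : 0 ≤ m) :
    ∑ k ∈ Icc (-m) m, (-1 : K) ^ k * ((ichoose (n - 1) (m + k) : K) * (ichoose n (m - k) : K))
      = ichoose (n - 1) m := by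
  obtain ⟨q, rfl⟩ : ∃ q : ℕ, n = q + 1 := ⟨(n - 1).toNat, by omega⟩
  lift m to ℕ using hm
  have hfactor : (1 - X : K[X]) ^ q * (1 + X) ^ (q + 1)
      = (1 - X ^ 2) ^ q + (1 - X ^ 2) ^ q * X := by
    rw [show (1 - X ^ 2 : K[X]) = (1 - X) * (1 + X) by ring, mul_pow]
    ring
  rw [add_sub_cancel_right, show (q : ℤ) + 1 = ((q + 1 : ℕ) : ℤ) by push_cast; rfl,
    sum_Icc_neg_one_zpow_mul_ichoose_mul_ichoose, hfactor, coeff_add,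
    coeff_one_sub_X_sq_pow_two_mul, ichoose_natCast, Int.cast_natCast]
  rcases m with _ | m
  · simp
  · rw [show 2 * (m + 1) = 2 * m + 1 + 1 by ring, coeff_mul_X,
      coeff_one_sub_X_sq_pow_two_mul_add_one, add_zero, ← mul_assoc,
      pow_mul_pow_eq_one _ (by norm_num), one_mul]

theorem sum_Icc_neg_one_zpow_mul_odd_mul_ichoose_mul_ichoose (n m : ℤ) (hn : 1 ≤ n)
    (hm : 0 ≤ m) :
    ∑ k ∈ Icc 0 m, (-1 : K) ^ k * (1 + 2 * (k : K)) *
        ((ichoose n (m + 1 + k) : K) * (ichoose n (m - k) : K))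
      = n * ichoose (n - 1) m := by
  set g : ℤ → K :=
    fun k ↦ (-1 : K) ^ k * ((ichoose (n - 1) (m + k) : K) * (ichoose n (m - k) : K))
  have hterm (k : ℤ) : (-1 : K) ^ k * (1 + 2 * (k : K)) *
      ((ichoose n (m + 1 + k) : K) * (ichoose n (m - k) : K)) = n * (g k + g (-1 - k)) := by
    have hhi : ((m + 1 + k : ℤ) : K) * ichoose n (m + 1 + k) = n * ichoose (n - 1) (m + k) := by
      rw [← Int.cast_mul, mul_ichoose_eq_mul_ichoose_sub_one, Int.cast_mul,
        show m + 1 + k - 1 = m + k by ring]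
    have hlo : ((m - k : ℤ) : K) * ichoose n (m - k) = n * ichoose (n - 1) (m - k - 1) := by
      rw [← Int.cast_mul, mul_ichoose_eq_mul_ichoose_sub_one, Int.cast_mul]
    have hsign : (-1 : K) ^ (-1 - k) = -(-1) ^ k := by
      rw [show -1 - k = -(k + 1) by ring, neg_one_zpow_neg, zpow_add_one₀ (by norm_num),
        mul_neg_one]
    simp only [g, hsign, show m + (-1 - k) = m - k - 1 by ring,
      show m - (-1 - k) = m + 1 + k by ring]
    push_cast at hhi hlo
    linear_combination (-1 : K) ^ k * (ichoose n (m - k) : K) * hhi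
      - (-1 : K) ^ k * (ichoose n (m + 1 + k) : K) * hlo
  have hedge : g (-m - 1) = 0 := by
    simp only [g, show m + (-m - 1) = -1 by ring, ichoose_of_neg _ (by norm_num : (-1 : ℤ) < 0),
      Int.cast_zero, zero_mul, mul_zero]
  calc _ = n * ∑ k ∈ Icc 0 m, (g k + g (-1 - k)) := by
        rw [mul_sum]
        exact sum_congr rfl fun k _ ↦ hterm k
    _ = n * ∑ k ∈ Icc (-m) m, g k := by
      rw [← sum_Icc_neg_sub_one_self g hm,
        ← sum_Icc_consecutive g (b := -m - 1) (by omega) (by omega), Icc_self, sum_singleton,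
        hedge, zero_add, sub_add_cancel]
    _ = n * ichoose (n - 1) m := by
      rw [sum_Icc_neg_one_zpow_mul_ichoose_sub_one_mul_ichoose n m hn hm]

end Convolutions

theorem K_nm_identity_general (n m : ℤ) (hn : 2 ≤ n) (hm0 : 0 ≤ m) :
    -(ichoose n 2 : ℚ) * (ichoose n m : ℚ) * (ichoose (n - 2) m : ℚ)
      - (ichoose n 2 : ℚ) *
        (∑ k ∈ Finset.Icc (1 : ℤ) m, (-1 : ℚ) ^ k *
          ((ichoose n (m + k) : ℚ) * (ichoose (n - 2) (m - k) : ℚ)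
            + (ichoose n (m - k) : ℚ) * (ichoose (n - 2) (m + k) : ℚ)))
      + ((2 * (n : ℚ) - 2 * (m : ℚ) - 1) / 2) *
        (∑ k ∈ Finset.Icc (0 : ℤ) m, (-1 : ℚ) ^ k * (1 + 2 * (k : ℚ)) *
          ((ichoose n (m + 1 + k) : ℚ) * (ichoose n (m - k) : ℚ)))
    = ((n : ℚ) ^ 2 / 2) * (ichoose (n - 1) m : ℚ) := by
  have hbracket := sum_Icc_neg_one_zpow_mul_ichoose_mul_ichoose_sub_two (K := ℚ) n m hn hm0
  rw [sum_Icc_neg_self _ hm0] at hbracket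
  simp only [add_zero, sub_zero, zpow_zero, one_mul, neg_one_zpow_neg, ← sub_eq_add_neg,
    sub_neg_eq_add, ← mul_add] at hbracket
  have hpascal : ((n : ℚ) - 1) * ((ichoose (n - 2) m : ℚ) - ichoose (n - 2) (m - 1))
      = (n - 1 - 2 * m) * ichoose (n - 1) m := by
    exact_mod_cast sub_one_mul_ichoose_sub_ichoose n m hn
  rw [sum_Icc_neg_one_zpow_mul_odd_mul_ichoose_mul_ichoose n m (by omega) hm0,
    ichoose_two n (by omega)]
  linear_combination (-((n : ℚ) * (n - 1) / 2)) * hbracket - n / 2 * hpascal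

theorem K_nm_identity (n m : ℤ) (hn : 2 ≤ n) (hm0 : 0 ≤ m) (hm1 : m ≤ n - 1) :
    -(ichoose n 2 : ℚ) * (ichoose n m : ℚ) * (ichoose (n - 2) m : ℚ)
      - (ichoose n 2 : ℚ) *
        (∑ k ∈ Finset.Icc (1 : ℤ) m, (-1 : ℚ) ^ k *
          ((ichoose n (m + k) : ℚ) * (ichoose (n - 2) (m - k) : ℚ)
            + (ichoose n (m - k) : ℚ) * (ichoose (n - 2) (m + k) : ℚ)))
      + ((2 * (n : ℚ) - 2 * (m : ℚ) - 1) / 2) *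
        (∑ k ∈ Finset.Icc (0 : ℤ) m, (-1 : ℚ) ^ k * (1 + 2 * (k : ℚ)) *
          ((ichoose n (m + 1 + k) : ℚ) * (ichoose n (m - k) : ℚ)))
    = ((n : ℚ) ^ 2 / 2) * (ichoose (n - 1) m : ℚ) :=
  K_nm_identity_general n m hn hm0
end

section
/- For integers n ≥ 2, r ≥ 1, s ≥ 1, m ≥ 1 with r + 2s + m = n + 1, the following recursion holds for the coefficients d(r,s,m) := (-1)^{r+s} (1/s!) (∏_{l=0}^{s-1} C(N-2l,2)) C(r+m,m) evaluated at appropriate N: with c₁ = (-1)^{r-1+s}(1/s!)(∏_{l=0}^{s-1} C(n-2l,2)) C(r-1+m,m), c₂ = (-1)^{r+s}(1/(s-1)!)(∏_{l=0}^{s-2} C(n-2l,2)) C(r+1+m,m), c₃ = (-1)^{r+s}(1/s!)(∏_{l=0}^{s-1} C(n-2l,2)) C(r+m-1,m-1), one has -c₁ + (r+1)c₂ + c₃ = (-1)^{r+s}(1/s!)(∏_{l=0}^{s-1} C(n+1-2l,2)) C(r+m,m). -/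
/-!
Because `(∏ l ∈ range s, C(N - 2l, 2)) * 2 ^ s` is the falling factorial `N (N-1) ⋯ (N-2s+1)`,
the products in the identity are all rational multiples of the falling factorial of `n` of
length `2s - 2`. After dividing it out, what remains follows from Pascal's rule
`C(r+m, m) = C(r+m-1, m) + C(r+m-1, m-1)`, the absorption identity
`(r+1) C(r+1+m, m) = (r+m+1) C(r+m, m)` and `r + 2s + m = n + 1`.
-/

open Finset Nat

theorem prod_choose_two_mul_two_pow (N s : ℕ) :
    (∏ l ∈ range s, (N - 2 * l).choose 2) * 2 ^ s = N.descFactorial (2 * s) := by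
  induction s with
  | zero => simp
  | succ s ih =>
    rw [prod_range_succ, pow_succ, mul_mul_mul_comm, ih,
      ← descFactorial_mul_descFactorial (show 2 * s ≤ 2 * (s + 1) by omega),
      show 2 * (s + 1) - 2 * s = 2 by omega, descFactorial_eq_factorial_mul_choose (N - 2 * s) 2,
      factorial_two]
    ring

theorem cast_prod_choose_two {K : Type*} [Field K] [CharZero K] (N s : ℕ) :
    ∏ l ∈ range s, ((N - 2 * l).choose 2 : K) = N.descFactorial (2 * s) / 2 ^ s := by
  rw [eq_div_iff (pow_ne_zero _ two_ne_zero)]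
  exact_mod_cast prod_choose_two_mul_two_pow N s

theorem descFactorial_two_mul_succ (a t : ℕ) :
    (a + 2 * t + 1).descFactorial (2 * (t + 1)) =
      a * (a + 1) * (a + 2 * t + 1).descFactorial (2 * t) := by
  rw [mul_add_one, descFactorial_succ, descFactorial_succ,
    show a + 2 * t + 1 - (2 * t + 1) = a by omega, show a + 2 * t + 1 - 2 * t = a + 1 by omega,
    mul_assoc]

theorem succ_descFactorial_two_mul_succ (a t : ℕ) :
    (a + 2 * t + 1 + 1).descFactorial (2 * (t + 1)) =
      (a + 2 * t + 2) * (a + 1) * (a + 2 * t + 1).descFactorial (2 * t) := by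
  rw [mul_add_one, succ_descFactorial_succ, descFactorial_succ,
    show a + 2 * t + 1 - 2 * t = a + 1 by omega, mul_assoc]

theorem coefficient_recursion_general (n r s m : ℕ)
    (hr : 1 ≤ r) (hs : 1 ≤ s) (hm : 1 ≤ m)
    (h : r + 2 * s + m = n + 1) :
    -((-1 : ℚ) ^ (r - 1 + s) * (1 / (s.factorial : ℚ)) *
        (∏ l ∈ Finset.range s, ((n - 2 * l).choose 2 : ℚ)) * ((r - 1 + m).choose m : ℚ))
      + ((r : ℚ) + 1) * ((-1 : ℚ) ^ (r + s) * (1 / ((s - 1).factorial : ℚ)) *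
        (∏ l ∈ Finset.range (s - 1), ((n - 2 * l).choose 2 : ℚ)) * ((r + 1 + m).choose m : ℚ))
      + ((-1 : ℚ) ^ (r + s) * (1 / (s.factorial : ℚ)) *
        (∏ l ∈ Finset.range s, ((n - 2 * l).choose 2 : ℚ)) * ((r + m - 1).choose (m - 1) : ℚ))
    = (-1 : ℚ) ^ (r + s) * (1 / (s.factorial : ℚ)) *
        (∏ l ∈ Finset.range s, ((n + 1 - 2 * l).choose 2 : ℚ)) * ((r + m).choose m : ℚ) := by
  obtain ⟨t, rfl⟩ : ∃ t, s = t + 1 := ⟨s - 1, by omega⟩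
  obtain rfl : n = r + m + 2 * t + 1 := by omega
  have sign : (-1 : ℚ) ^ (r - 1 + (t + 1)) = -(-1) ^ (r + (t + 1)) := by
    rw [show r + (t + 1) = r - 1 + (t + 1) + 1 by omega, pow_succ]
    ring
  have pascal : ((r + m - 1).choose (m - 1) : ℚ) = (r + m).choose m - (r - 1 + m).choose m := by
    rw [choose_eq_choose_pred_add (by omega) hm, show r + m - 1 = r - 1 + m by omega]
    push_cast
    ring
  have absorb : ((r + 1 + m).choose m : ℚ) = (r + m + 1) * (r + m).choose m / (r + 1) := by
    have key := choose_mul_succ_eq (r + m) m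
    rw [show r + m + 1 - m = r + 1 by omega, show r + m + 1 = r + 1 + m by ring] at key
    rw [eq_div_iff (by positivity)]
    qify at key
    linear_combination -key
  simp only [cast_prod_choose_two, Nat.add_sub_cancel, descFactorial_two_mul_succ,
    succ_descFactorial_two_mul_succ, sign, pascal, absorb, factorial_succ]
  push_cast
  field_simp
  ring

theorem coefficient_recursion (n r s m : ℕ)
    (hn : 2 ≤ n) (hr : 1 ≤ r) (hs : 1 ≤ s) (hm : 1 ≤ m)
    (h : r + 2 * s + m = n + 1) :
    -((-1 : ℚ) ^ (r - 1 + s) * (1 / (s.factorial : ℚ)) *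
        (∏ l ∈ Finset.range s, ((n - 2 * l).choose 2 : ℚ)) * ((r - 1 + m).choose m : ℚ))
      + ((r : ℚ) + 1) * ((-1 : ℚ) ^ (r + s) * (1 / ((s - 1).factorial : ℚ)) *
        (∏ l ∈ Finset.range (s - 1), ((n - 2 * l).choose 2 : ℚ)) * ((r + 1 + m).choose m : ℚ))
      + ((-1 : ℚ) ^ (r + s) * (1 / (s.factorial : ℚ)) *
        (∏ l ∈ Finset.range s, ((n - 2 * l).choose 2 : ℚ)) * ((r + m - 1).choose (m - 1) : ℚ))
    = (-1 : ℚ) ^ (r + s) * (1 / (s.factorial : ℚ)) *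
        (∏ l ∈ Finset.range s, ((n + 1 - 2 * l).choose 2 : ℚ)) * ((r + m).choose m : ℚ) :=
  coefficient_recursion_general n r s m hr hs hm h
end

section
/- For integers r, s, m ≥ 1 and n with r + 2s + m = n + 1, the rational identity C(r-1+m, m) + (r+1)s/C(r+m+1, 2) · C(r+1+m, m) + C(r+m-1, m-1) = ((r+2s+m)/(r+m)) · C(r+m, m) holds. -/
/-! Pascal's rule merges the two outer terms into `C(r+m, m)`, and the absorption identity
`(r + 1) C(r+m+1, m) = (r+m+1) C(r+m, m)` together with `C(r+m+1, 2) = (r+m+1)(r+m)/2` turns the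
middle term into `2s/(r+m) · C(r+m, m)`. -/

namespace Nat

theorem choose_sub_one_add_add_choose_sub_one {r m : ℕ} (hr : 1 ≤ r) (hm : 1 ≤ m) :
    (r - 1 + m).choose m + (r + m - 1).choose (m - 1) = (r + m).choose m := by
  obtain ⟨a, rfl⟩ := Nat.exists_eq_add_of_le' hr
  obtain ⟨b, rfl⟩ := Nat.exists_eq_add_of_le' hm
  rw [show a + 1 + (b + 1) = a + b + 1 + 1 by omega, choose_succ_succ', add_comm]
  congr 2

theorem choose_add_succ_mul_succ (r m : ℕ) :
    (r + 1 + m).choose m * (r + 1) = (r + m + 1) * (r + m).choose m := by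
  have h := choose_mul_succ_eq (r + m) m
  rw [show r + m + 1 - m = r + 1 by omega, show r + m + 1 = r + 1 + m by omega] at h
  rw [← h, mul_comm, show r + 1 + m = r + m + 1 by omega]

end Nat

theorem succ_mul_div_choose_two_mul_choose (r s m : ℕ) :
    ((r : ℚ) + 1) * s / ((r + m + 1).choose 2 : ℚ) * ((r + 1 + m).choose m : ℚ)
      = 2 * s / ((r : ℚ) + m) * ((r + m).choose m : ℚ) := by
  rcases Nat.eq_zero_or_pos (r + m) with h | h
  · obtain ⟨rfl, rfl⟩ : r = 0 ∧ m = 0 := by omega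
    simp
  have hrm : ((r : ℚ) + m) ≠ 0 := by exact_mod_cast h.ne'
  have absorb :
      ((r + 1 + m).choose m : ℚ) * ((r : ℚ) + 1) = ((r : ℚ) + m + 1) * (r + m).choose m := by
    exact_mod_cast Nat.choose_add_succ_mul_succ r m
  rw [Nat.cast_choose_two]
  push_cast
  rw [add_sub_cancel_right]
  field_simp
  linear_combination (s : ℚ) * absorb

theorem binomial_rational_identity_general (r s m : ℕ)
    (hr : 1 ≤ r) (hm : 1 ≤ m) :
    ((r - 1 + m).choose m : ℚ)
      + ((r : ℚ) + 1) * (s : ℚ) / ((r + m + 1).choose 2 : ℚ) * ((r + 1 + m).choose m : ℚ)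
      + ((r + m - 1).choose (m - 1) : ℚ)
    = (((r : ℚ) + 2 * s + m) / ((r : ℚ) + m)) * ((r + m).choose m : ℚ) := by
  have pascal : ((r - 1 + m).choose m : ℚ) + ((r + m - 1).choose (m - 1) : ℚ)
      = ((r + m).choose m : ℚ) := by
    exact_mod_cast Nat.choose_sub_one_add_add_choose_sub_one hr hm
  have hrm : ((r : ℚ) + m) ≠ 0 := by positivity
  rw [add_right_comm, pascal, succ_mul_div_choose_two_mul_choose]
  field_simp
  ring

theorem binomial_rational_identity (n r s m : ℕ)
    (hr : 1 ≤ r) (hs : 1 ≤ s) (hm : 1 ≤ m) (h : r + 2 * s + m = n + 1) :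
    ((r - 1 + m).choose m : ℚ)
      + ((r : ℚ) + 1) * (s : ℚ) / ((r + m + 1).choose 2 : ℚ) * ((r + 1 + m).choose m : ℚ)
      + ((r + m - 1).choose (m - 1) : ℚ)
    = (((r : ℚ) + 2 * s + m) / ((r : ℚ) + m)) * ((r + m).choose m : ℚ) :=
  binomial_rational_identity_general r s m hr hm
end
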